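/- Let Λ > 0 and M ≥ 0. If v : [0,∞) → ℝ is a twice differentiable nonnegative function with Λ v''(y) = (v'(y))² for all y > 0 and v(0) = M, then v is constant, i.e. v(y) = M for all y ≥ 0. -/

import Mathlib

/-!
The Cole–Hopf substitution `u = exp (-v / Λ)` linearises the equation: `Λ v'' = v'²` becomes
`u'' = 0`, so `u` is affine on `[0, ∞)`. Since `v ≥ 0` and `Λ > 0`, `u` takes values in `(0, 1]`,
and a bounded affine function on a half-line is constant. Hence `u`, and with it `v`, is constant.
-/

open Set Real

theorem eq_add_mul_sub_of_forall_hasDerivAt {f : ℝ → ℝ} {a c : ℝ}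
    (hf : ContinuousOn f (Ici a)) (hf' : ∀ x > a, HasDerivAt f c x) :
    ∀ x ≥ a, f x = f a + c * (x - a) := by
  intro x hx
  rcases hx.eq_or_lt with rfl | hax
  · ring
  obtain ⟨_, _, hslope⟩ := exists_hasDerivAt_eq_slope f (fun _ ↦ c) hax
    (hf.mono Icc_subset_Ici_self) fun y hy ↦ hf' y hy.1
  rw [hslope, div_mul_cancel₀ _ (sub_ne_zero.2 hax.ne')]
  ring

theorem eq_zero_of_forall_add_mul_mem_Icc {b t C D : ℝ}
    (h : ∀ y ≥ (0 : ℝ), b + t * y ∈ Icc C D) : t = 0 := by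
  obtain ⟨hCb, hbD⟩ : b ∈ Icc C D := by simpa using h 0 le_rfl
  rcases lt_trichotomy t 0 with ht | ht | ht
  · have := (h ((C - b - 1) / t) (div_nonneg_of_nonpos (by linarith) ht.le)).1
    rw [mul_div_cancel₀ _ ht.ne] at this
    linarith
  · exact ht
  · have := (h ((D - b + 1) / t) (div_nonneg (by linarith) ht.le)).2
    rw [mul_div_cancel₀ _ ht.ne'] at this
    linarith

section ColeHopf

variable {Lam : ℝ} {v v' v'' : ℝ → ℝ} {y : ℝ}

theorem hasDerivAt_exp_neg_div (hv : HasDerivAt v (v' y) y) :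
    HasDerivAt (fun x ↦ exp (-v x / Lam)) (-(v' y * exp (-v y / Lam)) / Lam) y :=
  (hv.neg.div_const Lam).exp.congr_deriv (by rw [Pi.neg_apply]; ring)

theorem hasDerivAt_mul_exp_neg_div_eq_zero (hLam : Lam ≠ 0) (hv : HasDerivAt v (v' y) y)
    (hv' : HasDerivAt v' (v'' y) y) (hode : Lam * v'' y = v' y ^ 2) :
    HasDerivAt (fun x ↦ v' x * exp (-v x / Lam)) 0 y :=
  (hv'.mul (hasDerivAt_exp_neg_div hv)).congr_deriv <| by
    rw [neg_div]
    field_simp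
    linear_combination exp (-(v y / Lam)) * hode

end ColeHopf

theorem p_eq_two_constant_general (Lam M : ℝ) (hLam : 0 < Lam)
    (v v' v'' : ℝ → ℝ)
    (hd1 : ∀ y ≥ (0 : ℝ), HasDerivAt v (v' y) y)
    (hd2 : ∀ y ≥ (0 : ℝ), HasDerivAt v' (v'' y) y)
    (heq : ∀ y > (0 : ℝ), Lam * v'' y = (v' y) ^ 2)
    (hnn : ∀ y ≥ (0 : ℝ), 0 ≤ v y)
    (h0 : v 0 = M) :
    ∀ y ≥ (0 : ℝ), v y = M := by
  set s := v' 0 * exp (-v 0 / Lam)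
  have hv_cont : ContinuousOn v (Ici 0) := fun y hy ↦ (hd1 y hy).continuousAt.continuousWithinAt
  have hv'_cont : ContinuousOn v' (Ici 0) := fun y hy ↦ (hd2 y hy).continuousAt.continuousWithinAt
  have hu_cont : ContinuousOn (fun x ↦ exp (-v x / Lam)) (Ici 0) :=
    (hv_cont.neg.div_const Lam).rexp
  have hfirst : ∀ y ≥ (0 : ℝ), v' y * exp (-v y / Lam) = s := by
    simpa using eq_add_mul_sub_of_forall_hasDerivAt (hv'_cont.mul hu_cont) fun y hy ↦
      hasDerivAt_mul_exp_neg_div_eq_zero hLam.ne' (hd1 y hy.le) (hd2 y hy.le) (heq y hy)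
  have haffine : ∀ y ≥ (0 : ℝ), exp (-v y / Lam) = exp (-v 0 / Lam) + -s / Lam * y := by
    simpa using eq_add_mul_sub_of_forall_hasDerivAt hu_cont fun y hy ↦ by
      simpa only [hfirst y hy.le] using hasDerivAt_exp_neg_div (Lam := Lam) (hd1 y hy.le)
  have hslope : -s / Lam = 0 := eq_zero_of_forall_add_mul_mem_Icc fun y hy ↦ by
    rw [← haffine y hy]
    exact ⟨(exp_pos _).le, exp_le_one_iff.2 (div_nonpos_of_nonpos_of_nonneg
      (neg_nonpos.2 (hnn y hy)) hLam.le)⟩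
  intro y hy
  have hu : exp (-v y / Lam) = exp (-v 0 / Lam) := by simpa [hslope] using haffine y hy
  rw [← h0]
  simpa [hLam.ne'] using hu

theorem p_eq_two_constant (Lam M : ℝ) (hLam : 0 < Lam) (hM : 0 ≤ M)
    (v v' v'' : ℝ → ℝ)
    (hd1 : ∀ y ≥ (0 : ℝ), HasDerivAt v (v' y) y)
    (hd2 : ∀ y ≥ (0 : ℝ), HasDerivAt v' (v'' y) y)
    (heq : ∀ y > (0 : ℝ), Lam * v'' y = (v' y) ^ 2)
    (hnn : ∀ y ≥ (0 : ℝ), 0 ≤ v y)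
    (h0 : v 0 = M) :
    ∀ y ≥ (0 : ℝ), v y = M :=
  p_eq_two_constant_general Lam M hLam v v' v'' hd1 hd2 heq hnn h0
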